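/- arXiv:1912.11385 — 2 statements merged into one kernel-verified Lean document; each statement's English description precedes it below -/
import Mathlib

section
/- Connected bipartite graphs (in particular, trees) with at least 3 vertices are not fractal: their rank dimension equals dim_P of the complement, both equal to Δ(G). -/
/-!
A bipartite graph is triangle-free, so two edges at a vertex `v` never lie in a common clique:
every clique cover puts at least `deg v` cliques through `v`, and in a separating equivalent cover
these cliques pairwise meet at `v`, so they need `deg v` distinct colours. Conversely, the edges
themselves form a cover with `deg v` cliques at each vertex; it separates vertices once `G` is
connected with at least three vertices, and a proper `Δ`-edge-colouring (König's theorem)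
colours it.

König's theorem is proved by induction on the edges. To colour the last edge `uv`, pick a colour
`a` missing at `u` and `b` missing at `v`, and swap `a` and `b` on the `a`/`b`-Kempe chain through
`v`. That chain cannot reach `u`: an alternating path from `v` to `u` starts with colour `a`, has
odd length since `u` and `v` lie on opposite sides, hence ends at `u` with colour `a`.
-/

open SimpleGraph

/-- A clique `k`-cover: a family of cliques covering every edge,
with every vertex in at most `k` cliques. -/
def CliqueKCover {V : Type} [Fintype V] [DecidableEq V] (G : SimpleGraph V) (k : ℕ)
    (𝒞 : Finset (Finset V)) : Prop :=
  (∀ C ∈ 𝒞, G.IsClique (C : Set V)) ∧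
  (∀ u v : V, G.Adj u v → ∃ C ∈ 𝒞, u ∈ C ∧ v ∈ C) ∧
  (∀ v : V, (𝒞.filter (fun C => v ∈ C)).card ≤ k)

/-- A separating equivalent `k`-cover: a clique cover whose cliques can be colored
with `k` colors so that intersecting cliques get distinct colors, and such that
every two distinct vertices are separated by some clique. -/
def SepEqCover {V : Type} [Fintype V] [DecidableEq V] (G : SimpleGraph V) (k : ℕ)
    (𝒞 : Finset (Finset V)) : Prop :=
  (∀ C ∈ 𝒞, G.IsClique (C : Set V)) ∧
  (∀ u v : V, G.Adj u v → ∃ C ∈ 𝒞, u ∈ C ∧ v ∈ C) ∧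
  (∃ c : Finset V → ℕ, (∀ C ∈ 𝒞, c C < k) ∧
    ∀ C ∈ 𝒞, ∀ D ∈ 𝒞, C ≠ D → (C ∩ D).Nonempty → c C ≠ c D) ∧
  (∀ u v : V, u ≠ v → ∃ C ∈ 𝒞, (u ∈ C ∧ v ∉ C) ∨ (v ∈ C ∧ u ∉ C))

namespace SimpleGraph

variable {V : Type*} {G H : SimpleGraph V} {c : Sym2 V → ℕ} {k a b : ℕ}

structure IsProperEdgeColoring (G : SimpleGraph V) (k : ℕ) (c : Sym2 V → ℕ) : Prop where
  lt : ∀ ⦃x y⦄, G.Adj x y → c s(x, y) < k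
  ne : ∀ ⦃x y z⦄, G.Adj x y → G.Adj x z → y ≠ z → c s(x, y) ≠ c s(x, z)

theorem IsProperEdgeColoring.update_of_deleteEdges [DecidableEq V] {u v : V}
    (hc : (G.deleteEdges {s(u, v)}).IsProperEdgeColoring k c) (ha : a < k)
    (hmiss : ∀ x ∈ s(u, v), ∀ y, (G.deleteEdges {s(u, v)}).Adj x y → c s(x, y) ≠ a) :
    G.IsProperEdgeColoring k (Function.update c s(u, v) a) := by
  have hadj : ∀ ⦃x y⦄, G.Adj x y → s(x, y) ≠ s(u, v) → (G.deleteEdges {s(u, v)}).Adj x y :=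
    fun x y hxy hne => (deleteEdges_adj ..).2 ⟨hxy, hne⟩
  have hnew : ∀ ⦃x y z⦄, G.Adj x z → y ≠ z → s(x, y) = s(u, v) → a ≠ c s(x, z) := by
    intro x y z hxz hyz hxy
    refine (hmiss x (hxy ▸ Sym2.mem_mk_left x y) z (hadj hxz ?_)).symm
    rw [← hxy, Ne, Sym2.congr_right]
    exact hyz.symm
  refine ⟨fun x y hxy => ?_, fun x y z hxy hxz hyz => ?_⟩
  · rw [Function.update_apply]
    split_ifs with h
    exacts [ha, hc.lt (hadj hxy h)]
  · simp only [Function.update_apply]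
    split_ifs with h₁ h₂ h₂
    · exact absurd (Sym2.congr_right.1 (h₁.trans h₂.symm)) hyz
    · exact hnew hxz hyz h₁
    · exact (hnew hxy hyz.symm h₂).symm
    · exact hc.ne (hadj hxy h₁) (hadj hxz h₂) hyz

def kempeGraph (G : SimpleGraph V) (c : Sym2 V → ℕ) (a b : ℕ) : SimpleGraph V where
  Adj x y := G.Adj x y ∧ (c s(x, y) = a ∨ c s(x, y) = b)
  symm := ⟨fun x _ h => ⟨h.1.symm, Sym2.eq_swap (a := x) ▸ h.2⟩⟩
  loopless := ⟨fun x h => G.loopless.irrefl x h.1⟩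

theorem IsProperEdgeColoring.eq_iff_of_isPath_kempeGraph (hc : G.IsProperEdgeColoring k c)
    (col : G.Coloring (Fin 2)) {u : V} (hu : ∀ y, G.Adj u y → c s(u, y) ≠ a) {x y : V}
    (h : (G.kempeGraph c a b).Adj x y) (q : (G.kempeGraph c a b).Walk y u)
    (hq : (Walk.cons h q).IsPath) : c s(x, y) = a ↔ col x = col u := by
  induction q generalizing x with
  | nil => exact iff_of_false (Sym2.eq_swap ▸ hu x h.1.symm) (col.valid h.1)
  | @cons y z u h' q ih =>
    have hxz : x ≠ z := by
      rintro rfl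
      exact (Walk.cons_isPath_iff _ _).1 hq |>.2 (by simp)
    have hyz := ih hu h' hq.of_cons
    have hne : c s(x, y) ≠ c s(y, z) := Sym2.eq_swap (a := y) ▸ hc.ne h.1.symm h'.1 hxz
    have hcol : col x ≠ col y := col.valid h.1
    have fin_two : ∀ p q r : Fin 2, p ≠ q → (p = r ↔ q ≠ r) := by decide
    rw [fin_two _ _ _ hcol, Ne, ← hyz]
    -- both colours lie in `{a, b}` and differ, so exactly one of them is `a`
    have hcxy := h.2
    have hcyz := h'.2
    omega

theorem IsProperEdgeColoring.not_reachable_kempeGraph (hc : G.IsProperEdgeColoring k c)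
    (col : G.Coloring (Fin 2)) {u v : V} (hu : ∀ y, G.Adj u y → c s(u, y) ≠ a)
    (hv : ∀ y, G.Adj v y → c s(v, y) ≠ b) (huv : col u ≠ col v) :
    ¬ (G.kempeGraph c a b).Reachable v u := by
  intro hr
  obtain ⟨p, hpath⟩ := hr.exists_isPath
  cases p with
  | nil => exact huv rfl
  | cons h q =>
    have hva : c s(v, _) = a := h.2.resolve_right (hv _ h.1)
    exact huv ((hc.eq_iff_of_isPath_kempeGraph col hu h q hpath).1 hva).symm

open scoped Classical in
noncomputable def kempeSwap (c : Sym2 V → ℕ) (a b : ℕ) (S : Set V) (e : Sym2 V) : ℕ :=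
  if ∃ x ∈ e, x ∈ S then Equiv.swap a b (c e) else c e

theorem kempeSwap_mk_of_mem {S : Set V} {x : V} (y : V) (hx : x ∈ S) :
    kempeSwap c a b S s(x, y) = Equiv.swap a b (c s(x, y)) :=
  if_pos ⟨x, Sym2.mem_mk_left x y, hx⟩

theorem kempeSwap_mk_of_notMem {S : Set V}
    (hS : ∀ ⦃x y⦄, (G.kempeGraph c a b).Adj x y → x ∈ S → y ∈ S) {x y : V} (h : G.Adj x y)
    (hx : x ∉ S) : kempeSwap c a b S s(x, y) = c s(x, y) := by
  by_cases hab : c s(x, y) = a ∨ c s(x, y) = b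
  · refine if_neg ?_
    rintro ⟨z, hz, hzS⟩
    rcases Sym2.mem_iff.1 hz with rfl | rfl
    · exact hx hzS
    · have hK : (G.kempeGraph c a b).Adj x z := ⟨h, hab⟩
      exact hx (hS hK.symm hzS)
  · push Not at hab
    unfold kempeSwap
    split_ifs
    exacts [Equiv.swap_apply_of_ne_of_ne hab.1 hab.2, rfl]

theorem IsProperEdgeColoring.kempeSwap (hc : G.IsProperEdgeColoring k c) (ha : a < k) (hb : b < k)
    {S : Set V} (hS : ∀ ⦃x y⦄, (G.kempeGraph c a b).Adj x y → x ∈ S → y ∈ S) :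
    G.IsProperEdgeColoring k (kempeSwap c a b S) := by
  refine ⟨fun x y hxy => ?_, fun x y z hxy hxz hyz => ?_⟩
  · by_cases hx : x ∈ S
    · rw [kempeSwap_mk_of_mem y hx, Equiv.swap_apply_def]
      have := hc.lt hxy
      split_ifs <;> omega
    · rw [kempeSwap_mk_of_notMem hS hxy hx]
      exact hc.lt hxy
  · by_cases hx : x ∈ S
    · rw [kempeSwap_mk_of_mem y hx, kempeSwap_mk_of_mem z hx]
      exact (Equiv.injective _).ne (hc.ne hxy hxz hyz)
    · rw [kempeSwap_mk_of_notMem hS hxy hx, kempeSwap_mk_of_notMem hS hxz hx]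
      exact hc.ne hxy hxz hyz

theorem exists_lt_forall_deleteEdges_adj_ne [Fintype V] [DecidableRel G.Adj] (hHG : H ≤ G)
    {u v : V} (huv : H.Adj u v) (hdeg : G.degree u ≤ k) (c : Sym2 V → ℕ) :
    ∃ a < k, ∀ y, (H.deleteEdges {s(u, v)}).Adj u y → c s(u, y) ≠ a := by
  classical
  set used := ((G.neighborFinset u).erase v).image fun y => c s(u, y)
  have hused : used.card < (Finset.range k).card := by
    have hv : v ∈ G.neighborFinset u := (mem_neighborFinset ..).2 (hHG huv)
    have h₁ : used.card ≤ ((G.neighborFinset u).erase v).card := Finset.card_image_le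
    have h₂ := Finset.card_erase_of_mem hv
    have h₃ := Finset.card_pos.2 ⟨v, hv⟩
    rw [card_neighborFinset_eq_degree] at h₂ h₃
    rw [Finset.card_range]
    omega
  obtain ⟨a, ha, haused⟩ := Finset.exists_mem_notMem_of_card_lt_card hused
  refine ⟨a, Finset.mem_range.1 ha, fun y hy hya => haused (Finset.mem_image.2 ⟨y, ?_, hya⟩)⟩
  rw [deleteEdges_adj, Set.mem_singleton_iff, Sym2.congr_right] at hy
  exact Finset.mem_erase.2 ⟨hy.2, (mem_neighborFinset ..).2 (hHG hy.1)⟩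

theorem IsProperEdgeColoring.exists_of_deleteEdges [Fintype V] [DecidableRel G.Adj]
    (hHG : H ≤ G) (hdeg : ∀ v, G.degree v ≤ k) (col : H.Coloring (Fin 2)) {u v : V}
    (huv : H.Adj u v) (hc : (H.deleteEdges {s(u, v)}).IsProperEdgeColoring k c) :
    ∃ c', H.IsProperEdgeColoring k c' := by
  classical
  obtain ⟨a, ha, hau⟩ := exists_lt_forall_deleteEdges_adj_ne hHG huv (hdeg u) c
  obtain ⟨b, hb, hbv⟩ := exists_lt_forall_deleteEdges_adj_ne hHG huv.symm (hdeg v) c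
  rw [Sym2.eq_swap (a := v)] at hbv
  set K := (H.deleteEdges {s(u, v)}).kempeGraph c a b
  set S : Set V := {x | K.Reachable v x}
  have hS : ∀ ⦃x y⦄, K.Adj x y → x ∈ S → y ∈ S := fun _ _ hxy hx => hx.trans hxy.reachable
  have hu : u ∉ S := hc.not_reachable_kempeGraph
    (col.comp (Hom.ofLE (deleteEdges_le _))) hau hbv (col.valid huv)
  refine ⟨_, (hc.kempeSwap ha hb hS).update_of_deleteEdges ha ?_⟩
  intro x hx y hxy
  rcases Sym2.mem_iff.1 hx with rfl | rfl
  · rw [kempeSwap_mk_of_notMem hS hxy hu]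
    exact hau y hxy
  · rw [kempeSwap_mk_of_mem y (Reachable.refl x : x ∈ S), Ne, Equiv.swap_apply_eq_iff,
      Equiv.swap_apply_left]
    exact hbv y hxy

theorem Colorable.exists_isProperEdgeColoring [Fintype V] [DecidableRel G.Adj]
    (hG : G.Colorable 2) (hdeg : ∀ v, G.degree v ≤ k) : ∃ c, G.IsProperEdgeColoring k c := by
  suffices ∀ H ≤ G, ∃ c, H.IsProperEdgeColoring k c from this G le_rfl
  intro H
  induction H using WellFoundedLT.induction with
  | _ H ih =>
    intro hHG
    by_cases hH : ∃ u v, H.Adj u v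
    · obtain ⟨u, v, huv⟩ := hH
      have hlt : H.deleteEdges {s(u, v)} < H := (deleteEdges_le _).lt_of_ne fun h =>
        Set.disjoint_singleton_right.1 (deleteEdges_eq_self.1 h) huv
      obtain ⟨c, hc⟩ := ih _ hlt ((deleteEdges_le _).trans hHG)
      obtain ⟨col⟩ := hG.mono_left hHG
      exact hc.exists_of_deleteEdges hHG hdeg col huv
    · push Not at hH
      exact ⟨0, fun x y h => (hH x y h).elim, fun x y _ h => (hH x y h).elim⟩

end SimpleGraph

theorem Sym2.toFinset_injective {α : Type*} [DecidableEq α] :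
    Function.Injective (Sym2.toFinset : Sym2 α → Finset α) := fun e f h =>
  Sym2.ext fun x => by rw [← Sym2.mem_toFinset, h, Sym2.mem_toFinset]

section Covers

variable {V : Type} [Fintype V] [DecidableEq V] {G : SimpleGraph V} {k : ℕ}
  {𝒞 : Finset (Finset V)}

theorem SimpleGraph.CliqueFree.degree_le_card_filter_mem [DecidableRel G.Adj]
    (hG : G.CliqueFree 3) (hclique : ∀ C ∈ 𝒞, G.IsClique (C : Set V))
    (hcover : ∀ u v : V, G.Adj u v → ∃ C ∈ 𝒞, u ∈ C ∧ v ∈ C) (v : V) :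
    G.degree v ≤ (𝒞.filter (v ∈ ·)).card := by
  have : ∀ w ∈ G.neighborFinset v, ∃ C ∈ 𝒞, v ∈ C ∧ w ∈ C :=
    fun w hw => hcover v w ((mem_neighborFinset ..).1 hw)
  choose! f hf using this
  refine Finset.card_le_card_of_injOn f
    (fun w hw => Finset.mem_filter.2 ⟨(hf w hw).1, (hf w hw).2.1⟩) fun w hw w' hw' hww' => ?_
  by_contra hne
  obtain ⟨hC, hvC, hwC⟩ := hf w hw
  have hw'C : w' ∈ f w := hww' ▸ (hf w' hw').2.2
  refine hG {v, w, w'} (is3Clique_triple_iff.2 ⟨?_, ?_, hclique _ hC hwC hw'C hne⟩)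
  exacts [(mem_neighborFinset ..).1 hw, (mem_neighborFinset ..).1 hw']

theorem CliqueKCover.maxDegree_le [DecidableRel G.Adj] (hG : G.CliqueFree 3)
    (h : CliqueKCover G k 𝒞) : G.maxDegree ≤ k :=
  G.maxDegree_le_of_forall_degree_le k fun v =>
    (hG.degree_le_card_filter_mem h.1 h.2.1 v).trans (h.2.2 v)

theorem SepEqCover.card_filter_mem_le (h : SepEqCover G k 𝒞) (v : V) :
    (𝒞.filter (v ∈ ·)).card ≤ k := by
  obtain ⟨c, hck, hcinj⟩ := h.2.2.1
  calc (𝒞.filter (v ∈ ·)).card ≤ (Finset.range k).card := by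
        refine Finset.card_le_card_of_injOn c (fun C hC => ?_) fun C hC D hD hCD => ?_
        · exact Finset.mem_range.2 (hck C (Finset.mem_filter.1 hC).1)
        · simp only [Finset.coe_filter, Set.mem_ofPred_eq] at hC hD
          by_contra hne
          exact hcinj C hC.1 D hD.1 hne ⟨v, Finset.mem_inter.2 ⟨hC.2, hD.2⟩⟩ hCD
    _ = k := Finset.card_range k

theorem SepEqCover.maxDegree_le [DecidableRel G.Adj] (hG : G.CliqueFree 3)
    (h : SepEqCover G k 𝒞) : G.maxDegree ≤ k :=
  G.maxDegree_le_of_forall_degree_le k fun v =>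
    (hG.degree_le_card_filter_mem h.1 h.2.1 v).trans (h.card_filter_mem_le v)

theorem cliqueKCover_image_toFinset [DecidableRel G.Adj] :
    CliqueKCover G G.maxDegree (G.edgeFinset.image Sym2.toFinset) := by
  refine ⟨fun C hC => ?_, fun u v huv => ?_, fun v => ?_⟩
  · obtain ⟨e, he, rfl⟩ := Finset.mem_image.1 hC
    induction e using Sym2.ind with | _ x y =>
    rw [Sym2.toFinset_mk_eq, Finset.coe_pair]
    exact isClique_pair.2 fun _ => mem_edgeFinset.1 he
  · exact ⟨s(u, v).toFinset, Finset.mem_image_of_mem _ (mem_edgeFinset.2 huv), by simp, by simp⟩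
  · calc ((G.edgeFinset.image Sym2.toFinset).filter (v ∈ ·)).card
        ≤ (G.edgeFinset.filter (v ∈ ·.toFinset)).card := by
          rw [Finset.filter_image]; exact Finset.card_image_le
      _ ≤ (G.incidenceFinset v).card := Finset.card_le_card fun e he => by
          simp only [Finset.mem_filter, mem_edgeFinset, Sym2.mem_toFinset] at he
          exact (mem_incidenceFinset ..).2 he
      _ ≤ G.maxDegree := (card_incidenceFinset_eq_degree ..).trans_le (G.degree_le_maxDegree v)

theorem SimpleGraph.Connected.exists_adj_mem_pair_notMem_pair (hG : G.Connected)
    (hcard : 3 ≤ Fintype.card V) (u v : V) :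
    ∃ x y, G.Adj x y ∧ x ∈ ({u, v} : Finset V) ∧ y ∉ ({u, v} : Finset V) := by
  obtain ⟨w, -, hw⟩ := Finset.exists_mem_notMem_of_card_lt_card (s := {u, v}) (t := .univ)
    (Finset.card_le_two.trans_lt (by rw [Finset.card_univ]; omega))
  obtain ⟨p⟩ := hG u w
  obtain ⟨d, -, hd₁, hd₂⟩ := p.exists_boundary_dart ({u, v} : Finset V) (by simp) hw
  exact ⟨_, _, d.adj, hd₁, hd₂⟩

theorem sepEqCover_image_toFinset [DecidableRel G.Adj] (hG : G.Connected)
    (hcard : 3 ≤ Fintype.card V) {c : Sym2 V → ℕ} (hc : G.IsProperEdgeColoring k c) :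
    SepEqCover G k (G.edgeFinset.image Sym2.toFinset) := by
  have hext := (Sym2.toFinset_injective (α := V)).extend_apply c 0
  refine ⟨cliqueKCover_image_toFinset.1, cliqueKCover_image_toFinset.2.1,
    ⟨Function.extend Sym2.toFinset c 0, fun C hC => ?_, fun C hC D hD hCD hCD' => ?_⟩,
    fun u v huv => ?_⟩
  · obtain ⟨e, he, rfl⟩ := Finset.mem_image.1 hC
    induction e using Sym2.ind with | _ x y =>
    rw [hext]
    exact hc.lt (mem_edgeFinset.1 he)
  · obtain ⟨e, he, rfl⟩ := Finset.mem_image.1 hC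
    obtain ⟨f, hf, rfl⟩ := Finset.mem_image.1 hD
    obtain ⟨t, ht⟩ := hCD'
    simp only [Finset.mem_inter, Sym2.mem_toFinset] at ht
    obtain ⟨z, rfl⟩ := Sym2.mem_iff_exists.1 ht.1
    obtain ⟨z', rfl⟩ := Sym2.mem_iff_exists.1 ht.2
    rw [hext, hext]
    exact hc.ne (mem_edgeFinset.1 he) (mem_edgeFinset.1 hf) fun h => hCD (h ▸ rfl)
  · obtain ⟨x, y, hxy, hx, hy⟩ := hG.exists_adj_mem_pair_notMem_pair hcard u v
    refine ⟨s(x, y).toFinset, Finset.mem_image_of_mem _ (mem_edgeFinset.2 hxy), ?_⟩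
    simp only [Finset.mem_insert, Finset.mem_singleton, not_or] at hx hy
    simp only [Sym2.mem_toFinset, Sym2.mem_iff]
    rcases hx with rfl | rfl <;> grind

end Covers

/-- Connected bipartite graphs with at least 3 vertices are not fractal: the rank dimension
and the Prague dimension of the complement coincide, both being equal to `Δ(G)`. -/
theorem stmt_6 {V : Type} [Fintype V] [DecidableEq V] (G : SimpleGraph V)
    [DecidableRel G.Adj] (hconn : G.Connected) (hcard : 3 ≤ Fintype.card V)
    (hbip : G.Colorable 2) :
    sInf {k : ℕ | ∃ 𝒞 : Finset (Finset V), CliqueKCover G k 𝒞} = G.maxDegree ∧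
    sInf {k : ℕ | ∃ 𝒞 : Finset (Finset V), SepEqCover G k 𝒞} = G.maxDegree := by
  have hG : G.CliqueFree 3 := hbip.cliqueFree (by norm_num)
  obtain ⟨c, hc⟩ := hbip.exists_isProperEdgeColoring G.degree_le_maxDegree
  exact ⟨IsLeast.csInf_eq ⟨⟨_, cliqueKCover_image_toFinset⟩, fun _ ⟨_, h⟩ => h.maxDegree_le hG⟩,
    IsLeast.csInf_eq ⟨⟨_, sepEqCover_image_toFinset hconn hcard hc⟩,
      fun _ ⟨_, h⟩ => h.maxDegree_le hG⟩⟩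
end

section
/- For every n ≥ 2, the Sierpinski gasket graph S_n is a fractal: dim_R(S_n) = 2 while dim_P(complement of S_n) = 3. -/
open SimpleGraph

/-- A graph together with three designated contact vertices. -/
structure Tetrad where
  V : Type
  G : SimpleGraph V
  x1 : V
  x2 : V
  x3 : V

/-- The gluing relation identifying contact vertices of three disjoint copies of `T`
in a cyclic fashion. -/
def glueRel (T : Tetrad) (a b : Fin 3 × T.V) : Prop :=
  (a = (0, T.x2) ∧ b = (1, T.x1)) ∨ (a = (1, T.x3) ∧ b = (2, T.x2)) ∨
    (a = (2, T.x1) ∧ b = (0, T.x3))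

/-- Glue three disjoint copies of `T` along contact vertices; the three unidentified
contact vertices become the contact vertices of the result. -/
def glue (T : Tetrad) : Tetrad where
  V := Quot (glueRel T)
  G :=
    { Adj := fun u v => u ≠ v ∧ ∃ (i : Fin 3) (a b : T.V),
        u = Quot.mk _ (i, a) ∧ v = Quot.mk _ (i, b) ∧ T.G.Adj a b
      symm := ⟨by
        rintro u v ⟨hne, i, a, b, hu, hv, hab⟩
        exact ⟨hne.symm, i, b, a, hv, hu, hab.symm⟩⟩
      loopless := ⟨fun u h => h.1 rfl⟩ }
  x1 := Quot.mk _ (0, T.x1)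
  x2 := Quot.mk _ (1, T.x2)
  x3 := Quot.mk _ (2, T.x3)

/-- The Sierpinski gasket graphs: `SG 1 = K₃`, and `SG (n+1)` is the gluing of three
copies of `SG n`. (`SG n` is the graph `S_n` for `n ≥ 1`.) -/
def SG : ℕ → Tetrad
  | 0 => ⟨Fin 3, ⊤, 0, 1, 2⟩
  | 1 => ⟨Fin 3, ⊤, 0, 1, 2⟩
  | n + 2 => glue (SG (n + 1))

/-- A clique `k`-cover, with set-valued clusters. -/
def CliqueKCoverS {V : Type} (G : SimpleGraph V) (k : ℕ) (𝒞 : Set (Set V)) : Prop :=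
  (∀ C ∈ 𝒞, G.IsClique C) ∧
  (∀ u v : V, G.Adj u v → ∃ C ∈ 𝒞, u ∈ C ∧ v ∈ C) ∧
  (∀ v : V, {C ∈ 𝒞 | v ∈ C}.Finite ∧ {C ∈ 𝒞 | v ∈ C}.ncard ≤ k)

/-- A separating equivalent `k`-cover with an explicit coloring `c` of the clusters. -/
def SepEqCoverWith {V : Type} (G : SimpleGraph V) (k : ℕ) (𝒞 : Set (Set V))
    (c : Set V → ℕ) : Prop :=
  (∀ C ∈ 𝒞, G.IsClique C) ∧
  (∀ u v : V, G.Adj u v → ∃ C ∈ 𝒞, u ∈ C ∧ v ∈ C) ∧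
  (∀ C ∈ 𝒞, c C < k) ∧
  (∀ C ∈ 𝒞, ∀ D ∈ 𝒞, C ≠ D → (C ∩ D).Nonempty → c C ≠ c D) ∧
  (∀ u v : V, u ≠ v → ∃ C ∈ 𝒞, (u ∈ C ∧ v ∉ C) ∨ (v ∈ C ∧ u ∉ C))

/-!
The lower bounds come from an induced diamond `a, b, c, d` (the triangles `abc` and `bcd`,
with `a ≁ d`), present in `S₂` and carried into every `S_n` by the copy embeddings. If every
vertex lies in one cluster, the clusters through `ba` and `bd` coincide and force `a ~ d`. In a
separating cover with two colors no three distinct clusters meet pairwise, so the cluster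
through `bc` contains every common neighbour of `b` and `c`, again both `a` and `d`.

For the upper bounds, cover `S_n` by its elementary triangles. Every vertex lies in at most two
of them and a contact vertex in only one. Color the triangles through the `k`-th contact of each
copy with `k`: the only identified vertices are contact `j` of copy `i` and contact `i` of copy
`j`, whose triangles then get the distinct colors `j` and `i`, and the `k`-th contact of the
glued graph is contact `k` of copy `k`, so the coloring propagates. It starts from `S₂`, where
the triangle of copy `i` gets color `i`.
-/

open Function Set

def Separates {V : Type*} (C : Set V) (u v : V) : Prop :=
  (u ∈ C ∧ v ∉ C) ∨ (v ∈ C ∧ u ∉ C)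

theorem Separates.symm {V : Type*} {C : Set V} {u v : V} (h : Separates C u v) :
    Separates C v u :=
  Or.symm h

structure IsInducedDiamond {V : Type*} (G : SimpleGraph V) (a b c d : V) : Prop where
  adj_ab : G.Adj a b
  adj_ac : G.Adj a c
  adj_bc : G.Adj b c
  adj_bd : G.Adj b d
  adj_cd : G.Adj c d
  not_adj_ad : ¬G.Adj a d
  ne_ad : a ≠ d

theorem IsInducedDiamond.map {V W : Type*} {G : SimpleGraph V} {G' : SimpleGraph W}
    {a b c d : V} (h : IsInducedDiamond G a b c d) (f : G ↪g G') :
    IsInducedDiamond G' (f a) (f b) (f c) (f d) where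
  adj_ab := f.map_adj_iff.2 h.adj_ab
  adj_ac := f.map_adj_iff.2 h.adj_ac
  adj_bc := f.map_adj_iff.2 h.adj_bc
  adj_bd := f.map_adj_iff.2 h.adj_bd
  adj_cd := f.map_adj_iff.2 h.adj_cd
  not_adj_ad had := h.not_adj_ad (f.map_adj_iff.1 had)
  ne_ad := f.injective.ne h.ne_ad

section LowerBounds

variable {V : Type} {G : SimpleGraph V} {k : ℕ} {𝒞 : Set (Set V)}

theorem CliqueKCoverS.two_le (h : CliqueKCoverS G k 𝒞) {a b d : V} (hba : G.Adj b a)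
    (hbd : G.Adj b d) (had : ¬G.Adj a d) (hne : a ≠ d) : 2 ≤ k := by
  obtain ⟨hclique, hcover, hcount⟩ := h
  by_contra! hk
  obtain ⟨C, hC, hbC, haC⟩ := hcover b a hba
  obtain ⟨D, hD, hbD, hdD⟩ := hcover b d hbd
  have hCD : C = D := (ncard_le_one (hcount b).1).1 ((hcount b).2.trans (by omega))
    C ⟨hC, hbC⟩ D ⟨hD, hbD⟩
  exact had (hclique C hC haC (hCD ▸ hdD) hne)

variable {col : Set V → ℕ}

theorem SepEqCoverWith.eq_or_eq_or_eq_of_inter (h : SepEqCoverWith G k 𝒞 col) (hk : k ≤ 2)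
    {C D E : Set V} (hC : C ∈ 𝒞) (hD : D ∈ 𝒞) (hE : E ∈ 𝒞) (hCD : (C ∩ D).Nonempty)
    (hCE : (C ∩ E).Nonempty) (hDE : (D ∩ E).Nonempty) : C = D ∨ C = E ∨ D = E := by
  obtain ⟨-, -, hlt, hne, -⟩ := h
  by_contra! hdist
  have := hne C hC D hD hdist.1 hCD
  have := hne C hC E hE hdist.2.1 hCE
  have := hne D hD E hE hdist.2.2 hDE
  have := hlt C hC
  have := hlt D hD
  have := hlt E hE
  omega

/- Otherwise the clusters through `bd` and `cd` coincide, and a cluster separating `b` from `c`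
meets both it and `C`. -/
theorem SepEqCoverWith.mem_of_adj_of_adj (h : SepEqCoverWith G k 𝒞 col) (hk : k ≤ 2)
    {C : Set V} (hC : C ∈ 𝒞) {b c d : V} (hb : b ∈ C) (hc : c ∈ C) (hbc : b ≠ c)
    (hbd : G.Adj b d) (hcd : G.Adj c d) : d ∈ C := by
  by_contra hdC
  obtain ⟨D, hD, hbD, hdD⟩ := h.2.1 b d hbd
  obtain ⟨D', hD', hcD', hdD'⟩ := h.2.1 c d hcd
  obtain rfl : D = D' := by
    rcases h.eq_or_eq_or_eq_of_inter hk hC hD hD' ⟨b, hb, hbD⟩ ⟨c, hc, hcD'⟩ ⟨d, hdD, hdD'⟩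
      with rfl | rfl | hDD'
    exacts [(hdC hdD).elim, (hdC hdD').elim, hDD']
  obtain ⟨E, hE, hEbc⟩ := h.2.2.2.2 b c hbc
  have hEinter : (E ∩ C).Nonempty ∧ (E ∩ D).Nonempty ∧ ¬(b ∈ E ∧ c ∈ E) := by
    rcases hEbc with ⟨hbE, hcE⟩ | ⟨hcE, hbE⟩
    exacts [⟨⟨b, hbE, hb⟩, ⟨b, hbE, hbD⟩, fun h => hcE h.2⟩,
      ⟨⟨c, hcE, hc⟩, ⟨c, hcE, hcD'⟩, fun h => hbE h.1⟩]
  rcases h.eq_or_eq_or_eq_of_inter hk hE hC hD hEinter.1 hEinter.2.1 ⟨b, hb, hbD⟩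
    with rfl | rfl | rfl
  exacts [hEinter.2.2 ⟨hb, hc⟩, hEinter.2.2 ⟨hbD, hcD'⟩, hdC hdD]

theorem SepEqCoverWith.three_le (h : SepEqCoverWith G k 𝒞 col) {a b c d : V}
    (hd : IsInducedDiamond G a b c d) : 3 ≤ k := by
  by_contra! hk
  obtain ⟨C, hC, hbC, hcC⟩ := h.2.1 b c hd.adj_bc
  have haC := h.mem_of_adj_of_adj (by omega) hC hbC hcC hd.adj_bc.ne hd.adj_ab.symm hd.adj_ac.symm
  have hdC := h.mem_of_adj_of_adj (by omega) hC hbC hcC hd.adj_bc.ne hd.adj_bd hd.adj_cd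
  exact hd.not_adj_ad (h.1 C hC haC hdC hd.ne_ad)

end LowerBounds

namespace Tetrad

def contact (T : Tetrad) : Fin 3 → T.V := ![T.x1, T.x2, T.x3]

def copy (T : Tetrad) (i : Fin 3) (a : T.V) : (glue T).V := Quot.mk _ (i, a)

variable {T : Tetrad}

theorem glue_contact (k : Fin 3) : (glue T).contact k = T.copy k (T.contact k) := by
  fin_cases k <;> rfl

theorem copy_contact_comm {i j : Fin 3} (hij : i ≠ j) :
    T.copy i (T.contact j) = T.copy j (T.contact i) := by
  fin_cases i <;> fin_cases j
  all_goals first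
    | exact (hij rfl).elim
    | (apply Quot.sound; simp [glueRel, contact]; done)
    | (symm; apply Quot.sound; simp [glueRel, contact])

-- Contact `j` of copy `i` is glued to contact `i` of copy `j`; nothing else is identified.
theorem copy_eq_copy_iff (hc : Injective T.contact) {i j : Fin 3} {a b : T.V} :
    T.copy i a = T.copy j b ↔ (i = j ∧ a = b) ∨ (i ≠ j ∧ a = T.contact j ∧ b = T.contact i) := by
  let R : Fin 3 × T.V → Fin 3 × T.V → Prop := fun p q =>
    (p.1 = q.1 ∧ p.2 = q.2) ∨ (p.1 ≠ q.1 ∧ p.2 = T.contact q.1 ∧ q.2 = T.contact p.1)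
  have hR : Equivalence R := by
    refine ⟨fun _ => .inl ⟨rfl, rfl⟩, ?_, ?_⟩
    · rintro p q (⟨h₁, h₂⟩ | ⟨h₁, h₂, h₃⟩)
      exacts [.inl ⟨h₁.symm, h₂.symm⟩, .inr ⟨Ne.symm h₁, h₃, h₂⟩]
    · rintro ⟨i, a⟩ ⟨j, b⟩ ⟨k, d⟩ h₁ h₂
      simp only [R] at h₁ h₂ ⊢
      rcases h₁ with ⟨rfl, rfl⟩ | ⟨hij, ha, hb⟩
      · exact h₂
      rcases h₂ with ⟨rfl, rfl⟩ | ⟨-, hb', hd⟩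
      · exact .inr ⟨hij, ha, hb⟩
      · obtain rfl := hc (hb.symm.trans hb')
        exact .inl ⟨rfl, ha.trans hd.symm⟩
  have hrel : glueRel T ≤ R := by
    rintro p q (⟨rfl, rfl⟩ | ⟨rfl, rfl⟩ | ⟨rfl, rfl⟩) <;> exact .inr ⟨by simp, rfl, rfl⟩
  constructor
  · exact fun h => hR.eqvGen_iff.1 (Relation.EqvGen.mono hrel _ _ (Quot.eqvGen_exact h))
  · rintro (⟨rfl, rfl⟩ | ⟨hij, rfl, rfl⟩)
    exacts [rfl, copy_contact_comm hij]

theorem copy_injective (hc : Injective T.contact) (i : Fin 3) : Injective (T.copy i) :=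
  fun _ _ h => by
    rcases (copy_eq_copy_iff hc).1 h with ⟨-, h⟩ | ⟨h, -⟩
    exacts [h, (h rfl).elim]

theorem copy_eq_glue_contact_iff (hc : Injective T.contact) {i k : Fin 3} {a : T.V} :
    T.copy i a = (glue T).contact k ↔ i = k ∧ a = T.contact k := by
  rw [glue_contact, copy_eq_copy_iff hc]
  constructor
  · rintro (h | ⟨hik, -, h⟩)
    exacts [h, (hik (hc h).symm).elim]
  · exact .inl

theorem glue_contact_injective (hc : Injective T.contact) : Injective (glue T).contact :=
  fun k _ h => ((copy_eq_glue_contact_iff hc).1 ((glue_contact k).symm.trans h)).1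

theorem copy_mem_range_copy_iff (hc : Injective T.contact) {i j : Fin 3} {a : T.V} :
    T.copy i a ∈ range (T.copy j) ↔ i = j ∨ a = T.contact j := by
  constructor
  · rintro ⟨b, h⟩
    rcases (copy_eq_copy_iff hc).1 h with ⟨rfl, -⟩ | ⟨-, -, h⟩
    exacts [.inl rfl, .inr h]
  · rintro (rfl | rfl)
    · exact mem_range_self a
    · obtain rfl | hij := eq_or_ne i j
      exacts [mem_range_self _, ⟨T.contact i, (copy_contact_comm hij).symm⟩]

theorem exists_copy_eq (v : (glue T).V) : ∃ i a, T.copy i a = v := by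
  induction v using Quot.ind with
  | mk p => exact ⟨p.1, p.2, rfl⟩

theorem exists_range_copy_of_adj {u v : (glue T).V} (h : (glue T).G.Adj u v) :
    ∃ i, u ∈ range (T.copy i) ∧ v ∈ range (T.copy i) := by
  obtain ⟨-, i, a, b, rfl, rfl, -⟩ := h
  exact ⟨i, mem_range_self a, mem_range_self b⟩

theorem glue_adj_copy_iff (hc : Injective T.contact) {i : Fin 3} {a b : T.V} :
    (glue T).G.Adj (T.copy i a) (T.copy i b) ↔ T.G.Adj a b := by
  constructor
  · rintro ⟨hne, j, p, q, hp, hq, hpq⟩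
    rcases (copy_eq_copy_iff hc).1 hp with ⟨rfl, rfl⟩ | ⟨hij, rfl, -⟩
    · rcases (copy_eq_copy_iff hc).1 hq with ⟨-, rfl⟩ | ⟨hij, -⟩
      exacts [hpq, (hij rfl).elim]
    · rcases (copy_eq_copy_iff hc).1 hq with ⟨h, -⟩ | ⟨-, rfl, -⟩
      exacts [(hij h).elim, (hne rfl).elim]
  · exact fun h => ⟨fun he => h.ne (copy_injective hc i he), i, a, b, rfl, rfl, h⟩

def copyEmbedding (hc : Injective T.contact) (i : Fin 3) : T.G ↪g (glue T).G where
  toFun := T.copy i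
  inj' := copy_injective hc i
  map_rel_iff' := glue_adj_copy_iff hc

theorem isInducedDiamond_glue (hc : Injective T.contact)
    (h01 : T.G.Adj (T.contact 0) (T.contact 1)) (h02 : T.G.Adj (T.contact 0) (T.contact 2))
    (h12 : T.G.Adj (T.contact 1) (T.contact 2)) :
    IsInducedDiamond (glue T).G (T.copy 0 (T.contact 0)) (T.copy 0 (T.contact 1))
      (T.copy 0 (T.contact 2)) (T.copy 1 (T.contact 2)) where
  adj_ab := (glue_adj_copy_iff hc).2 h01
  adj_ac := (glue_adj_copy_iff hc).2 h02
  adj_bc := (glue_adj_copy_iff hc).2 h12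
  adj_bd := by
    rw [copy_contact_comm (i := 0) (j := 1) (by decide)]
    exact (glue_adj_copy_iff hc).2 h02
  adj_cd := by
    rw [copy_contact_comm (i := 0) (j := 2) (by decide),
      copy_contact_comm (i := 1) (j := 2) (by decide)]
    exact (glue_adj_copy_iff hc).2 h01
  not_adj_ad had := by
    obtain ⟨i, ha, hd⟩ := exists_range_copy_of_adj had
    rw [copy_mem_range_copy_iff hc] at ha hd
    obtain rfl : 0 = i := ha.elim id fun h => hc h
    exact hd.elim (by decide) fun h => absurd (hc h) (by decide)
  ne_ad h := by
    rcases (copy_eq_copy_iff hc).1 h with ⟨h, -⟩ | ⟨-, h, -⟩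
    exacts [absurd h (by decide), absurd (hc h) (by decide)]

structure IsContactCliqueCover (T : Tetrad) (𝒯 : Set (Set T.V)) : Prop where
  isClique : ∀ C ∈ 𝒯, T.G.IsClique C
  exists_mem_of_adj : ∀ u v, T.G.Adj u v → ∃ C ∈ 𝒯, u ∈ C ∧ v ∈ C
  exists_mem : ∀ v, ∃ C ∈ 𝒯, v ∈ C
  subset_pair : ∀ v, ∃ C₁ C₂, {C ∈ 𝒯 | v ∈ C} ⊆ {C₁, C₂}
  subset_singleton_contact : ∀ k, ∃ C₀, {C ∈ 𝒯 | T.contact k ∈ C} ⊆ {C₀}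

def glueCover (T : Tetrad) (𝒯 : Set (Set T.V)) : Set (Set (glue T).V) :=
  ⋃ i, image (T.copy i) '' 𝒯

variable {𝒯 : Set (Set T.V)}

theorem image_copy_mem_glueCover {C : Set T.V} (hC : C ∈ 𝒯) (i : Fin 3) :
    T.copy i '' C ∈ T.glueCover 𝒯 :=
  mem_iUnion.2 ⟨i, C, hC, rfl⟩

theorem exists_of_copy_mem_glueCover (hc : Injective T.contact) {S : Set (glue T).V}
    (hS : S ∈ T.glueCover 𝒯) {i : Fin 3} {a : T.V} (ha : T.copy i a ∈ S) :
    ∃ C ∈ 𝒯, (S = T.copy i '' C ∧ a ∈ C) ∨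
      ∃ k, k ≠ i ∧ a = T.contact k ∧ S = T.copy k '' C ∧ T.contact i ∈ C := by
  obtain ⟨j, C, hC, rfl⟩ := mem_iUnion.1 hS
  obtain ⟨b, hb, hba⟩ := ha
  refine ⟨C, hC, ?_⟩
  rcases (copy_eq_copy_iff hc).1 hba with ⟨rfl, rfl⟩ | ⟨hji, rfl, rfl⟩
  exacts [.inl ⟨rfl, hb⟩, .inr ⟨j, hji, rfl, rfl, hb⟩]

theorem IsContactCliqueCover.glue_subset_pair (hc : Injective T.contact)
    (h : IsContactCliqueCover T 𝒯) (v : (glue T).V) :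
    ∃ S₁ S₂, {S ∈ T.glueCover 𝒯 | v ∈ S} ⊆ {S₁, S₂} := by
  obtain ⟨i, a, rfl⟩ := exists_copy_eq v
  by_cases hglued : ∃ k, k ≠ i ∧ a = T.contact k
  · obtain ⟨k, hki, rfl⟩ := hglued
    obtain ⟨C₁, hC₁⟩ := h.subset_singleton_contact k
    obtain ⟨C₂, hC₂⟩ := h.subset_singleton_contact i
    refine ⟨T.copy i '' C₁, T.copy k '' C₂, fun S ⟨hS, hv⟩ => ?_⟩
    obtain ⟨C, hC, ⟨rfl, hkC⟩ | ⟨l, -, hkl, rfl, hiC⟩⟩ := exists_of_copy_mem_glueCover hc hS hv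
    · exact .inl (congrArg _ (hC₁ ⟨hC, hkC⟩))
    · obtain rfl := hc hkl
      exact .inr (congrArg _ (hC₂ ⟨hC, hiC⟩))
  · obtain ⟨C₁, C₂, hC⟩ := h.subset_pair a
    refine ⟨T.copy i '' C₁, T.copy i '' C₂, fun S ⟨hS, hv⟩ => ?_⟩
    obtain ⟨C, hC', ⟨rfl, haC⟩ | ⟨k, hki, rfl, -⟩⟩ := exists_of_copy_mem_glueCover hc hS hv
    · rcases hC ⟨hC', haC⟩ with rfl | rfl
      exacts [.inl rfl, .inr rfl]
    · exact (hglued ⟨k, hki, rfl⟩).elim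

theorem IsContactCliqueCover.glue (hc : Injective T.contact) (h : IsContactCliqueCover T 𝒯) :
    IsContactCliqueCover (glue T) (T.glueCover 𝒯) where
  isClique := by
    rintro _ ⟨_, ⟨i, rfl⟩, C, hC, rfl⟩ _ ⟨a, ha, rfl⟩ _ ⟨b, hb, rfl⟩ hne
    exact (glue_adj_copy_iff hc).2 (h.isClique C hC ha hb (ne_of_apply_ne _ hne))
  exists_mem_of_adj := by
    rintro _ _ ⟨-, i, a, b, rfl, rfl, hab⟩
    obtain ⟨C, hC, haC, hbC⟩ := h.exists_mem_of_adj a b hab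
    exact ⟨_, image_copy_mem_glueCover hC i, mem_image_of_mem _ haC, mem_image_of_mem _ hbC⟩
  exists_mem v := by
    obtain ⟨i, a, rfl⟩ := exists_copy_eq v
    obtain ⟨C, hC, haC⟩ := h.exists_mem a
    exact ⟨_, image_copy_mem_glueCover hC i, mem_image_of_mem _ haC⟩
  subset_pair := h.glue_subset_pair hc
  subset_singleton_contact k := by
    obtain ⟨C₀, hC₀⟩ := h.subset_singleton_contact k
    refine ⟨T.copy k '' C₀, fun S ⟨hS, hv⟩ => ?_⟩
    rw [glue_contact] at hv
    obtain ⟨C, hC, ⟨rfl, hkC⟩ | ⟨l, hlk, hkl, -⟩⟩ := exists_of_copy_mem_glueCover hc hS hv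
    exacts [congrArg _ (hC₀ ⟨hC, hkC⟩), (hlk (hc hkl).symm).elim]

theorem exists_separates_of_mem_range_copy (hmem : ∀ a, ∃ C ∈ 𝒯, a ∈ C)
    {u v : (glue T).V} {j : Fin 3} (hu : u ∈ range (T.copy j)) (hv : v ∉ range (T.copy j)) :
    ∃ S ∈ T.glueCover 𝒯, Separates S u v := by
  obtain ⟨a, rfl⟩ := hu
  obtain ⟨C, hC, haC⟩ := hmem a
  exact ⟨_, image_copy_mem_glueCover hC j,
    .inl ⟨mem_image_of_mem _ haC, fun hv' => hv (image_subset_range _ _ hv')⟩⟩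

/- A contact of copy `i` other than its own `i`-th one also lies in a neighbouring copy, which
misses every other vertex of copy `i`; so `𝒯` only has to separate pairs off the contacts. -/
theorem exists_separates_copy_copy (hc : Injective T.contact) (hmem : ∀ a, ∃ C ∈ 𝒯, a ∈ C)
    (hsep : ∀ a b, a ≠ b → a ∉ range T.contact → ∃ C ∈ 𝒯, Separates C a b)
    {i : Fin 3} {a b : T.V} (hab : a ≠ b) (hai : a ≠ T.contact i) :
    ∃ S ∈ T.glueCover 𝒯, Separates S (T.copy i a) (T.copy i b) := by
  by_cases ha : a ∈ range T.contact
  · obtain ⟨k, rfl⟩ := ha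
    have hki : k ≠ i := fun h => hai (h ▸ rfl)
    refine exists_separates_of_mem_range_copy hmem
      ((copy_mem_range_copy_iff hc).2 (.inr rfl)) ?_
    rw [copy_mem_range_copy_iff hc]
    rintro (h | h)
    exacts [hki h.symm, hab h.symm]
  · obtain ⟨C, hC, hCab⟩ := hsep a b hab ha
    refine ⟨_, image_copy_mem_glueCover hC i, ?_⟩
    simpa only [Separates, (copy_injective hc i).mem_set_image] using hCab

theorem glueCover_separates (hc : Injective T.contact) (hmem : ∀ a, ∃ C ∈ 𝒯, a ∈ C)
    (hsep : ∀ a b, a ≠ b → a ∉ range T.contact → ∃ C ∈ 𝒯, Separates C a b)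
    {u v : (glue T).V} (huv : u ≠ v) : ∃ S ∈ T.glueCover 𝒯, Separates S u v := by
  obtain ⟨i, a, rfl⟩ := exists_copy_eq u
  by_cases hv : v ∈ range (T.copy i)
  · obtain ⟨b, rfl⟩ := hv
    have hab : a ≠ b := fun h => huv (h ▸ rfl)
    by_cases hai : a = T.contact i
    · obtain ⟨S, hS, hSab⟩ :=
        exists_separates_copy_copy hc hmem hsep hab.symm fun h => hab (hai.trans h.symm)
      exact ⟨S, hS, hSab.symm⟩
    · exact exists_separates_copy_copy hc hmem hsep hab hai
  · exact exists_separates_of_mem_range_copy hmem (mem_range_self a) hv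

/- `F i` colors copy `i`. The copies of `S₁ = K₃` need different colorings: its only clique
contains all three contacts. -/
structure IsGluingColoring (T : Tetrad) (𝒯 : Set (Set T.V)) (F : Fin 3 → Set T.V → ℕ) :
    Prop where
  lt_three : ∀ i, ∀ C ∈ 𝒯, F i C < 3
  ne_of_inter : ∀ i, ∀ C ∈ 𝒯, ∀ D ∈ 𝒯, C ≠ D → (C ∩ D).Nonempty → F i C ≠ F i D
  ne_of_glued : ∀ i j, i ≠ j → ∀ C ∈ 𝒯, ∀ D ∈ 𝒯,
    T.contact j ∈ C → T.contact i ∈ D → F i C ≠ F j D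
  eq_of_contact : ∀ k, ∀ C ∈ 𝒯, T.contact k ∈ C → F k C = k

open Classical in
noncomputable def glueColoring (T : Tetrad) (𝒯 : Set (Set T.V)) (F : Fin 3 → Set T.V → ℕ)
    (S : Set (glue T).V) : ℕ :=
  if h : ∃ p : Fin 3 × Set T.V, p.2 ∈ 𝒯 ∧ S = T.copy p.1 '' p.2 then
    F h.choose.1 h.choose.2
  else 0

variable {F : Fin 3 → Set T.V → ℕ}

theorem exists_glueColoring_eq {S : Set (glue T).V} (hS : S ∈ T.glueCover 𝒯) :
    ∃ i, ∃ C ∈ 𝒯, S = T.copy i '' C ∧ T.glueColoring 𝒯 F S = F i C := by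
  have h : ∃ p : Fin 3 × Set T.V, p.2 ∈ 𝒯 ∧ S = T.copy p.1 '' p.2 := by
    obtain ⟨i, C, hC, rfl⟩ := mem_iUnion.1 hS
    exact ⟨(i, C), hC, rfl⟩
  exact ⟨_, _, h.choose_spec.1, h.choose_spec.2, by rw [glueColoring, dif_pos h]⟩

theorem IsGluingColoring.glueColoring_ne (hc : Injective T.contact)
    (hF : IsGluingColoring T 𝒯 F) {S S' : Set (glue T).V} (hS : S ∈ T.glueCover 𝒯)
    (hS' : S' ∈ T.glueCover 𝒯) (hne : S ≠ S') (hinter : (S ∩ S').Nonempty) :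
    T.glueColoring 𝒯 F S ≠ T.glueColoring 𝒯 F S' := by
  obtain ⟨i, C, hC, rfl, hcolS⟩ := exists_glueColoring_eq (F := F) hS
  obtain ⟨j, D, hD, rfl, hcolS'⟩ := exists_glueColoring_eq (F := F) hS'
  obtain ⟨_, ⟨a, haC, rfl⟩, b, hbD, hba⟩ := hinter
  rw [hcolS, hcolS']
  rcases (copy_eq_copy_iff hc).1 hba with ⟨rfl, rfl⟩ | ⟨hji, rfl, rfl⟩
  · exact hF.ne_of_inter j C hC D hD (fun h => hne (h ▸ rfl)) ⟨b, haC, hbD⟩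
  · exact hF.ne_of_glued i j hji.symm C hC D hD haC hbD

structure IsGasketCover (T : Tetrad) (𝒯 : Set (Set T.V)) (col : Set T.V → ℕ) : Prop
    extends IsContactCliqueCover T 𝒯 where
  color_lt : ∀ C ∈ 𝒯, col C < 3
  color_ne : ∀ C ∈ 𝒯, ∀ D ∈ 𝒯, C ≠ D → (C ∩ D).Nonempty → col C ≠ col D
  color_contact : ∀ k, ∀ C ∈ 𝒯, T.contact k ∈ C → col C = k
  separates : ∀ u v, u ≠ v → ∃ C ∈ 𝒯, Separates C u v

theorem isGasketCover_glue (hc : Injective T.contact) (h : IsContactCliqueCover T 𝒯)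
    (hsep : ∀ a b, a ≠ b → a ∉ range T.contact → ∃ C ∈ 𝒯, Separates C a b)
    (hF : IsGluingColoring T 𝒯 F) :
    IsGasketCover (glue T) (T.glueCover 𝒯) (T.glueColoring 𝒯 F) where
  toIsContactCliqueCover := h.glue hc
  color_lt S hS := by
    obtain ⟨i, C, hC, -, hcol⟩ := exists_glueColoring_eq (F := F) hS
    exact hcol ▸ hF.lt_three i C hC
  color_ne _ hS _ hS' := hF.glueColoring_ne hc hS hS'
  color_contact k S hS hk := by
    obtain ⟨i, C, hC, rfl, hcol⟩ := exists_glueColoring_eq (F := F) hS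
    obtain ⟨a, haC, ha⟩ := hk
    obtain ⟨rfl, rfl⟩ := (copy_eq_glue_contact_iff hc).1 ha
    exact hcol.trans (hF.eq_of_contact i C hC haC)
  separates _ _ := glueCover_separates hc h.exists_mem hsep

variable {col : Set T.V → ℕ}

theorem IsGasketCover.isGluingColoring (h : IsGasketCover T 𝒯 col) :
    IsGluingColoring T 𝒯 fun _ => col where
  lt_three _ := h.color_lt
  ne_of_inter _ := h.color_ne
  ne_of_glued i j hij C hC D hD hjC hiD := by
    rw [h.color_contact j C hC hjC, h.color_contact i D hD hiD]
    exact fun h => hij (Fin.val_injective h).symm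
  eq_of_contact := h.color_contact

theorem IsGasketCover.glue (hc : Injective T.contact) (h : IsGasketCover T 𝒯 col) :
    IsGasketCover (glue T) (T.glueCover 𝒯) (T.glueColoring 𝒯 fun _ => col) :=
  isGasketCover_glue hc h.toIsContactCliqueCover (fun a b hab _ => h.separates a b hab)
    h.isGluingColoring

theorem IsGasketCover.cliqueKCoverS (h : IsGasketCover T 𝒯 col) : CliqueKCoverS T.G 2 𝒯 := by
  refine ⟨h.isClique, h.exists_mem_of_adj, fun v => ?_⟩
  obtain ⟨C₁, C₂, hsub⟩ := h.subset_pair v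
  refine ⟨(toFinite _).subset hsub, (ncard_le_ncard hsub (toFinite _)).trans ?_⟩
  exact (ncard_insert_le _ _).trans (by rw [ncard_singleton])

theorem IsGasketCover.sepEqCoverWith (h : IsGasketCover T 𝒯 col) :
    SepEqCoverWith T.G 3 𝒯 col :=
  ⟨h.isClique, h.exists_mem_of_adj, h.color_lt, h.color_ne, h.separates⟩

end Tetrad

open Tetrad

theorem contact_SG_one (k : Fin 3) : (SG 1).contact k = k := by
  fin_cases k <;> rfl

theorem contact_injective_SG : ∀ m, Injective (SG (m + 1)).contact
  | 0 => fun i j h => by rwa [contact_SG_one, contact_SG_one] at h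
  | m + 1 => glue_contact_injective (contact_injective_SG m)

theorem isContactCliqueCover_SG_one : IsContactCliqueCover (SG 1) {univ} where
  isClique _ hC := hC ▸ fun _ _ _ _ h => (top_adj _ _).2 h
  exists_mem_of_adj _ _ _ := ⟨univ, rfl, trivial, trivial⟩
  exists_mem _ := ⟨univ, rfl, trivial⟩
  subset_pair _ := ⟨univ, univ, fun _ hC => .inl hC.1⟩
  subset_singleton_contact _ := ⟨univ, fun _ hC => hC.1⟩

theorem isGluingColoring_SG_one : IsGluingColoring (SG 1) {univ} fun i _ => i where
  lt_three i _ _ := i.isLt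
  ne_of_inter _ _ hC _ hD hCD _ := (hCD (hC.trans hD.symm)).elim
  ne_of_glued _ _ hij _ _ _ _ _ _ := Fin.val_injective.ne hij
  eq_of_contact _ _ _ _ := rfl

theorem exists_isGasketCover_SG : ∀ m, ∃ 𝒯 col, IsGasketCover (SG (m + 2)) 𝒯 col
  | 0 => ⟨_, _, isGasketCover_glue (contact_injective_SG 0) isContactCliqueCover_SG_one
      (fun a _ _ ha => (ha ⟨a, contact_SG_one a⟩).elim) isGluingColoring_SG_one⟩
  | m + 1 =>
    let ⟨_, _, h⟩ := exists_isGasketCover_SG m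
    ⟨_, _, h.glue (contact_injective_SG (m + 1))⟩

theorem exists_isInducedDiamond_SG : ∀ m, ∃ a b c d, IsInducedDiamond (SG (m + 2)).G a b c d
  | 0 =>
    have hadj {i j : Fin 3} (hij : i ≠ j) : (SG 1).G.Adj ((SG 1).contact i) ((SG 1).contact j) :=
      (top_adj _ _).2 ((contact_injective_SG 0).ne hij)
    ⟨_, _, _, _, isInducedDiamond_glue (contact_injective_SG 0)
      (hadj (by decide)) (hadj (by decide)) (hadj (by decide))⟩
  | m + 1 =>
    let ⟨_, _, _, _, h⟩ := exists_isInducedDiamond_SG m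
    ⟨_, _, _, _, h.map (copyEmbedding (contact_injective_SG (m + 1)) 0)⟩

/-- For every `n ≥ 2` the Sierpinski gasket graph `S_n` is a fractal:
its rank dimension equals 2 while the Prague dimension of its complement equals 3. -/
theorem stmt_14 (n : ℕ) (hn : 2 ≤ n) :
    sInf {k : ℕ | ∃ 𝒞 : Set (Set (SG n).V), CliqueKCoverS (SG n).G k 𝒞} = 2 ∧
    sInf {k : ℕ | ∃ (𝒞 : Set (Set (SG n).V)) (c : Set (SG n).V → ℕ),
        SepEqCoverWith (SG n).G k 𝒞 c} = 3 := by
  obtain ⟨m, rfl⟩ := Nat.exists_eq_add_of_le' hn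
  obtain ⟨𝒯, col, h𝒯⟩ := exists_isGasketCover_SG m
  obtain ⟨a, b, c, d, hd⟩ := exists_isInducedDiamond_SG m
  constructor
  · exact IsLeast.csInf_eq ⟨⟨𝒯, h𝒯.cliqueKCoverS⟩,
      fun k ⟨_, h⟩ => h.two_le hd.adj_ab.symm hd.adj_bd hd.not_adj_ad hd.ne_ad⟩
  · exact IsLeast.csInf_eq ⟨⟨𝒯, col, h𝒯.sepEqCoverWith⟩, fun k ⟨_, _, h⟩ => h.three_le hd⟩
end
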